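/- arXiv:2105.00701 — 6 statements merged into one kernel-verified Lean document; each statement's English description precedes it below -/
import Mathlib

section
/- Let R be a ring, let (X_n)_{n∈ℕ} and (Y_i)_{i∈I} be families of R-modules, and let φ : ∏_{n∈ℕ} X_n → ⊕_{i∈I} Y_i be an R-linear map. Let C be a finitely generated R-module and let γ = (γ'_n : C_n → C_{n+1})_{n∈ℕ} be a sequence of R-linear maps with C_0 = C; write γ_n : C → C_n for the composite of the first n maps. Then there exists m ∈ ℕ and a cofinite subset J ⊆ I such that for every j ∈ J, every R-linear map θ : C_m → ∏_{n∈ℕ} X_n whose components θ_n : C_m → X_n vanish for n < m, the composite π_j ∘ φ ∘ θ ∘ γ_m : C → Y_j factors through γ_n : C → C_n for every n ∈ ℕ (where π_j is the projection onto Y_j). -/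
universe u

open DirectSum

/-- The composite `γₙ : C₀ → Cₙ` of the first `n` maps of a sequence of linear maps. -/
def chaseComposite {R : Type u} [Ring R] {Cn : ℕ → Type u}
    [∀ n, AddCommGroup (Cn n)] [∀ n, Module R (Cn n)]
    (γ' : ∀ n : ℕ, Cn n →ₗ[R] Cn (n + 1)) : ∀ n : ℕ, Cn 0 →ₗ[R] Cn n
  | 0 => LinearMap.id
  | n + 1 => (γ' n).comp (chaseComposite γ' n)

lemma exists_finset_support {R : Type u} [Ring R] {M : Type*} [AddCommGroup M] [Module R M]
    [Module.Finite R M] {I : Type*} [DecidableEq I] (Y : I → Type*)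
    [∀ i, AddCommGroup (Y i)] [∀ i, Module R (Y i)] (f : M →ₗ[R] ⨁ i, Y i) :
    ∃ T : Finset I, ∀ (c : M) (j : I), j ∉ T → f c j = 0 := by
  classical
  obtain ⟨s, hs⟩ := Module.finite_def.mp (inferInstance : Module.Finite R M)
  refine ⟨s.sup fun x => (f x).support, fun c j hj => ?_⟩
  have hc : c ∈ Submodule.span R (s : Set M) := hs ▸ Submodule.mem_top
  induction hc using Submodule.span_induction with
  | mem x hx =>
      have h2 : j ∉ (f x).support :=
        fun h => hj (Finset.le_sup (f := fun x => (f x).support) hx h)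
      simpa using DFinsupp.notMem_support_iff.mp h2
  | zero => simp
  | add x y _ _ hx hy => simp [map_add, hx, hy]
  | smul r x _ hx => rw [map_smul, DFinsupp.smul_apply, hx, smul_zero]

lemma chase_tfac {R : Type u} [Ring R] {Cn : ℕ → Type u}
    [∀ n, AddCommGroup (Cn n)] [∀ n, Module R (Cn n)]
    (γ' : ∀ n : ℕ, Cn n →ₗ[R] Cn (n + 1)) (a b : ℕ) (hab : a ≤ b) :
    ∃ t : Cn a →ₗ[R] Cn b, t.comp (chaseComposite γ' a) = chaseComposite γ' b := by
  induction b, hab using Nat.le_induction with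
  | base => exact ⟨LinearMap.id, by simp⟩
  | succ b hb ih =>
      obtain ⟨t, ht⟩ := ih
      exact ⟨(γ' b).comp t, by rw [LinearMap.comp_assoc, ht]; rfl⟩

/-- Chase's lemma for modules: given `φ : ∏ₙ Xₙ → ⊕ᵢ Yᵢ`, a finitely generated module
`C = C₀` and a sequence of maps `γ'ₙ : Cₙ → Cₙ₊₁`, there is `m : ℕ` such that for all `j`
in a cofinite subset of `I` and every `θ : Cₘ → ∏ₙ Xₙ` whose components vanish in degrees
`< m`, the composite `πⱼ ∘ φ ∘ θ ∘ γₘ : C → Yⱼ` factors through `γₙ : C → Cₙ` for all `n`. -/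
theorem chase_lemma_modules {R : Type u} [Ring R]
    (X : ℕ → Type u) [∀ n, AddCommGroup (X n)] [∀ n, Module R (X n)]
    {I : Type u} [DecidableEq I] (Y : I → Type u) [∀ i, AddCommGroup (Y i)]
    [∀ i, Module R (Y i)]
    (φ : (∀ n, X n) →ₗ[R] (⨁ i, Y i))
    (Cn : ℕ → Type u) [∀ n, AddCommGroup (Cn n)] [∀ n, Module R (Cn n)]
    (γ' : ∀ n : ℕ, Cn n →ₗ[R] Cn (n + 1))
    [Module.Finite R (Cn 0)] :
    ∃ (m : ℕ) (J : Set I), J.Finite ∧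
      ∀ j ∉ J, ∀ θ : Cn m →ₗ[R] (∀ n, X n),
        (∀ n < m, (LinearMap.proj n).comp θ = 0) →
        ∀ n : ℕ, ∃ g : Cn n →ₗ[R] Y j,
          g.comp (chaseComposite γ' n) =
            (DirectSum.component R I Y j).comp
              (φ.comp (θ.comp (chaseComposite γ' m))) := by
  classical
  by_contra hcon
  push_neg at hcon
  -- step existence
  have step : ∀ (m : ℕ) (T : Finset I), ∃ (j : I), j ∉ T ∧
      ∃ θ : Cn m →ₗ[R] (∀ n, X n),
      (∀ n < m, (LinearMap.proj n).comp θ = 0) ∧ ∃ nw : ℕ, ∀ g : Cn nw →ₗ[R] Y j,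
        g.comp (chaseComposite γ' nw) ≠
          (DirectSum.component R I Y j).comp
            (φ.comp (θ.comp (chaseComposite γ' m))) := by
    intro m T
    obtain ⟨j, hj, θ, hθ, n, hn⟩ := hcon m T T.finite_toSet
    exact ⟨j, hj, θ, hθ, n, hn⟩
  choose sj hsj sθ hvan sn hnf using step
  have hsupp : ∀ (m : ℕ) (θ : Cn m →ₗ[R] (∀ n, X n)), ∃ T : Finset I,
      ∀ (c : Cn 0) (j : I), j ∉ T → φ (θ (chaseComposite γ' m c)) j = 0 := by
    intro m θ
    obtain ⟨T, hT⟩ := exists_finset_support Y (φ.comp (θ.comp (chaseComposite γ' m)))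
    exact ⟨T, fun c j hj => hT c j hj⟩
  choose sT hsT using hsupp
  -- the recursive construction
  set next : ℕ × Finset I → ℕ × Finset I := fun p =>
    (max (p.1 + 1) (sn p.1 p.2), p.2 ∪ {sj p.1 p.2} ∪ sT p.1 (sθ p.1 p.2)) with hnext
  set st : ℕ → ℕ × Finset I := fun k => next^[k] (0, ∅) with hstdef
  set m : ℕ → ℕ := fun k => (st k).1 with hmdef
  set T : ℕ → Finset I := fun k => (st k).2 with hTdef
  set j : ℕ → I := fun k => sj (m k) (T k) with hjdef
  set θ : (k : ℕ) → Cn (m k) →ₗ[R] (∀ n, X n) := fun k => sθ (m k) (T k) with hθdef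
  set nw : ℕ → ℕ := fun k => sn (m k) (T k) with hnwdef
  have hst : ∀ k, st (k + 1) = next (st k) := fun k =>
    Function.iterate_succ_apply' next k _
  have hm : ∀ k, m (k + 1) = max (m k + 1) (nw k) := fun k =>
    congrArg Prod.fst (hst k)
  have hT : ∀ k, T (k + 1) = T k ∪ {j k} ∪ sT (m k) (θ k) := fun k =>
    congrArg Prod.snd (hst k)
  have hm_lt : ∀ k, m k < m (k + 1) := fun k => by
    rw [hm k]; exact lt_of_lt_of_le (Nat.lt_succ_self _) (le_max_left _ _)
  have hm_mono : StrictMono m := strictMono_nat_of_lt_succ hm_lt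
  have hm_ge : ∀ k, k ≤ m k := fun k => hm_mono.le_apply
  have hT_sub : ∀ k, T k ⊆ T (k + 1) := fun k => by
    rw [hT k]; exact (Finset.subset_union_left.trans Finset.subset_union_left)
  have hT_mono : ∀ {a b : ℕ}, a ≤ b → T a ⊆ T b := by
    intro a b hab
    induction hab with
    | refl => exact Finset.Subset.refl _
    | step _ ih => exact ih.trans (hT_sub _)
  have hj_not : ∀ k, j k ∉ T k := fun k => hsj _ _
  have hj_mem : ∀ k, j k ∈ T (k + 1) := fun k => by
    rw [hT k]
    exact Finset.mem_union_left _ (Finset.mem_union_right _ (Finset.mem_singleton_self _))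
  have hj_inj : Function.Injective j := by
    intro a b hab
    by_contra hne
    rcases Nat.lt_or_ge a b with h | h
    · exact hj_not b (hT_mono (Nat.succ_le_of_lt h) (hab ▸ hj_mem a))
    · have h' : b < a := lt_of_le_of_ne h (Ne.symm ?_)
      · exact hj_not a (hT_mono (Nat.succ_le_of_lt h') (hab ▸ hj_mem b))
      · omega
  have hnw_le : ∀ k l, k < l → nw k ≤ m l := by
    intro k l hkl
    calc nw k ≤ m (k + 1) := by rw [hm k]; exact le_max_right _ _
    _ ≤ m l := hm_mono.monotone hkl
  -- the maps Ψ l : C → ∏ X and their vanishing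
  set Ψ : (l : ℕ) → Cn 0 →ₗ[R] (∀ n, X n) :=
    fun l => (θ l).comp (chaseComposite γ' (m l)) with hΨdef
  have hΨ0 : ∀ l (c : Cn 0) (n : ℕ), n < m l → Ψ l c n = 0 := by
    intro l c n hn
    show θ l (chaseComposite γ' (m l) c) n = 0
    simpa using LinearMap.congr_fun (hvan (m l) (T l) n hn) (chaseComposite γ' (m l) c)
  -- Θ
  set Θ : Cn 0 →ₗ[R] (∀ n, X n) :=
    LinearMap.pi (fun n => ∑ l ∈ Finset.range (n + 1), (LinearMap.proj n).comp (Ψ l))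
    with hΘdef
  have hΘ : ∀ (c : Cn 0) (n : ℕ), Θ c n = ∑ l ∈ Finset.range (n + 1), Ψ l c n := by
    intro c n
    simp [hΘdef, LinearMap.pi_apply, LinearMap.sum_apply]
  obtain ⟨F, hF⟩ := exists_finset_support Y (φ.comp Θ)
  obtain ⟨-, ⟨k, rfl⟩, hk⟩ :=
    (Set.infinite_range_of_injective hj_inj).exists_notMem_finset F
  -- transition maps out of Cn (nw k)
  have htex : ∀ l : ℕ, ∃ t : Cn (nw k) →ₗ[R] Cn (m l),
      k < l → t.comp (chaseComposite γ' (nw k)) = chaseComposite γ' (m l) := by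
    intro l
    by_cases hl : k < l
    · obtain ⟨t, ht⟩ := chase_tfac γ' (nw k) (m l) (hnw_le k l hl)
      exact ⟨t, fun _ => ht⟩
    · exact ⟨0, fun h => absurd h hl⟩
  choose t ht using htex
  set G : Cn (nw k) →ₗ[R] (∀ n, X n) :=
    LinearMap.pi (fun n => ∑ l ∈ Finset.Ioc k n,
      (LinearMap.proj n).comp ((θ l).comp (t l))) with hGdef
  -- decomposition
  have hdec : ∀ c : Cn 0, Θ c =
      (∑ l ∈ Finset.range k, Ψ l c) + Ψ k c + G (chaseComposite γ' (nw k) c) := by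
    intro c
    funext n
    have hG : G (chaseComposite γ' (nw k) c) n = ∑ l ∈ Finset.Ioc k n, Ψ l c n := by
      simp only [hGdef, LinearMap.pi_apply, LinearMap.sum_apply, LinearMap.comp_apply,
        LinearMap.proj_apply]
      refine Finset.sum_congr rfl fun l hl => ?_
      have h1 := ht l (Finset.mem_Ioc.mp hl).1
      have h2 : t l (chaseComposite γ' (nw k) c) = chaseComposite γ' (m l) c := by
        rw [← LinearMap.comp_apply, h1]
      rw [h2]
      rfl
    set N := max n k with hN
    have hkN : k ≤ N := le_max_right n k
    have hnN : n ≤ N := le_max_left n k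
    have h1 : Θ c n = ∑ l ∈ Finset.range (N + 1), Ψ l c n := by
      rw [hΘ]
      refine Finset.sum_subset ?_ ?_
      · intro x hx
        simp only [Finset.mem_range] at *
        omega
      · intro x hx1 hx2
        simp only [Finset.mem_range] at hx1 hx2
        have hxn : n < x := by omega
        exact hΨ0 x c n (lt_of_lt_of_le hxn (hm_ge x))
    have hsplit : Finset.range (N + 1) = Finset.range (k + 1) ∪ Finset.Ioc k N := by
      ext x
      simp only [Finset.mem_range, Finset.mem_union, Finset.mem_Ioc]
      omega
    have hdisj : Disjoint (Finset.range (k + 1)) (Finset.Ioc k N) := by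
      rw [Finset.disjoint_left]
      intro x hx1 hx2
      simp only [Finset.mem_range, Finset.mem_Ioc] at hx1 hx2
      omega
    have h2 : ∑ l ∈ Finset.Ioc k N, Ψ l c n = ∑ l ∈ Finset.Ioc k n, Ψ l c n := by
      symm
      refine Finset.sum_subset (Finset.Ioc_subset_Ioc_right hnN) ?_
      intro x hx1 hx2
      simp only [Finset.mem_Ioc] at hx1 hx2
      have hxn : n < x := by omega
      exact hΨ0 x c n (lt_of_lt_of_le hxn (hm_ge x))
    rw [h1, hsplit, Finset.sum_union hdisj, Finset.sum_range_succ, h2, ← hG]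
    simp [Finset.sum_apply]
  -- head terms die at j k
  have hhead : ∀ l, l < k → ∀ c : Cn 0, φ (Ψ l c) (j k) = 0 := by
    intro l hl c
    refine hsT (m l) (θ l) c (j k) ?_
    intro hmem
    refine hj_not k (hT_mono (Nat.succ_le_of_lt hl) ?_)
    rw [hT l]
    exact Finset.mem_union_right _ hmem
  -- the contradiction
  refine hnf (m k) (T k)
    (-((DirectSum.component R I Y (j k)).comp (φ.comp G))) ?_
  refine LinearMap.ext fun c => ?_
  have hzero : φ (Θ c) (j k) = 0 := hF c (j k) hk
  have hdc := hdec c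
  have expand : φ (Θ c) (j k) =
      (∑ l ∈ Finset.range k, φ (Ψ l c) (j k)) + φ (Ψ k c) (j k)
        + φ (G (chaseComposite γ' (nw k) c)) (j k) := by
    rw [hdc]
    rw [map_add, map_add, DFinsupp.add_apply, DFinsupp.add_apply, map_sum,
      DFinsupp.finset_sum_apply]
  have hheadsum : ∑ l ∈ Finset.range k, φ (Ψ l c) (j k) = 0 :=
    Finset.sum_eq_zero fun l hl => hhead l (Finset.mem_range.mp hl) c
  have key : φ (Ψ k c) (j k) = -(φ (G (chaseComposite γ' (nw k) c)) (j k)) := by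
    rw [hheadsum, hzero, zero_add] at expand
    exact eq_neg_of_add_eq_zero_left expand.symm
  exact (show -((φ (G (chaseComposite γ' (nw k) c))) (j k)) =
    (φ ((θ k) (chaseComposite γ' (m k) c))) (j k) from key.symm)
end

section
/- Let R be a ring, (X_i)_{i∈I} a family of injective R-modules, and 0 → B → C → C' → 0 a short exact sequence of R-modules with B finitely generated. Then the sequence 0 → Hom(C', ⊕_i X_i) → Hom(C, ⊕_i X_i) → Hom(B, ⊕_i X_i) → 0 is exact; i.e., every map B → ⊕_i X_i extends to C. -/
universe u

open DirectSum

/-- If `(Xᵢ)` is a family of injective `R`-modules (no noetherian hypothesis on `R`) and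
`0 → B → C → C' → 0` is a short exact sequence with `B` finitely generated, then
`0 → Hom(C', ⊕ᵢ Xᵢ) → Hom(C, ⊕ᵢ Xᵢ) → Hom(B, ⊕ᵢ Xᵢ) → 0` is exact; in particular every
map `B → ⊕ᵢ Xᵢ` extends to `C`. -/
theorem hom_ses_exact_into_directSum_of_injective {R : Type u} [Ring R]
    {I : Type u} [DecidableEq I] (X : I → Type u)
    [∀ i, AddCommGroup (X i)] [∀ i, Module R (X i)] [∀ i, Module.Injective R (X i)]
    (B C C' : Type u) [AddCommGroup B] [AddCommGroup C] [AddCommGroup C']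
    [Module R B] [Module R C] [Module R C'] [Module.Finite R B]
    (i : B →ₗ[R] C) (p : C →ₗ[R] C')
    (hi : Function.Injective i) (hp : Function.Surjective p)
    (hex : LinearMap.range i = LinearMap.ker p) :
    Function.Injective (fun g : C' →ₗ[R] (⨁ i, X i) => g.comp p) ∧
    (∀ g : C →ₗ[R] (⨁ i, X i), g.comp i = 0 ↔ ∃ h : C' →ₗ[R] (⨁ i, X i), h.comp p = g) ∧
    (∀ f : B →ₗ[R] (⨁ i, X i), ∃ g : C →ₗ[R] (⨁ i, X i), g.comp i = f) := by
  classical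
  refine ⟨?_, ?_, ?_⟩
  · intro g g' h
    ext c'
    obtain ⟨c, rfl⟩ := hp c'
    exact DFunLike.congr_fun (congrArg (fun F : C →ₗ[R] (⨁ i, X i) => F c) h) _
  · intro g
    constructor
    · intro hg
      have hker : LinearMap.ker p ≤ LinearMap.ker g := by
        rw [← hex]
        rintro _ ⟨b, rfl⟩
        exact congrArg (fun F : B →ₗ[R] (⨁ i, X i) => F b) hg
      let e := p.quotKerEquivOfSurjective hp
      refine ⟨((LinearMap.ker p).liftQ g hker).comp (e.symm : C' →ₗ[R] _), ?_⟩
      ext c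
      have he : e ((LinearMap.ker p).mkQ c) = p c := rfl
      simp only [LinearMap.comp_apply, LinearMap.coe_coe, ← he]
      erw [LinearEquiv.symm_apply_apply]
      rfl
    · rintro ⟨h, rfl⟩
      ext b
      have : p (i b) = 0 := by
        rw [← LinearMap.mem_ker, ← hex]
        exact ⟨b, rfl⟩
      simp [this]
  · intro f
    -- B is finitely generated: pick generators
    obtain ⟨s, hs⟩ := Module.Finite.fg_top (R := R) (M := B)
    set S : Finset I := s.sup (fun b => (f b).support) with hS
    -- componentwise extensions
    have hext : ∀ j : I, ∃ gj : C →ₗ[R] X j,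
        ∀ b, gj (i b) = (DirectSum.component R I X j).comp f b := by
      intro j
      exact Module.Injective.out i hi ((DirectSum.component R I X j).comp f)
    choose gj hgj using hext
    refine ⟨∑ j ∈ S, (DirectSum.lof R I X j).comp (gj j), ?_⟩
    refine LinearMap.ext fun b => ?_
    simp only [LinearMap.comp_apply, LinearMap.sum_apply, LinearMap.coe_sum,
      Finset.sum_apply]
    have hb : ∀ b : B, (∑ j ∈ S, (DirectSum.lof R I X j) (gj j (i b))) = f b ↔
        b ∈ LinearMap.ker ((∑ j ∈ S, (DirectSum.lof R I X j).comp ((gj j).comp i)) - f) := by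
      intro b
      simp [LinearMap.sub_apply, sub_eq_zero]
    rw [hb b]
    have : (⊤ : Submodule R B) ≤
        LinearMap.ker ((∑ j ∈ S, (DirectSum.lof R I X j).comp ((gj j).comp i)) - f) := by
      rw [← hs, Submodule.span_le]
      intro b hbs
      rw [SetLike.mem_coe, ← hb b]
      have h1 : ∀ j, (DirectSum.lof R I X j) (gj j (i b)) =
          DirectSum.of X j ((f b) j) := by
        intro j
        rw [hgj j b]
        rfl
      calc (∑ j ∈ S, (DirectSum.lof R I X j) (gj j (i b)))
          = ∑ j ∈ S, DirectSum.of X j ((f b) j) := by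
            exact Finset.sum_congr rfl fun j _ => h1 j
        _ = ∑ j ∈ (f b).support, DirectSum.of X j ((f b) j) := by
            refine (Finset.sum_subset ?_ ?_).symm
            · exact Finset.le_sup (f := fun b => (f b).support) hbs
            · intro j _ hj
              simp [DFinsupp.notMem_support_iff.mp hj]
        _ = f b := DirectSum.sum_support_of _
    exact this trivial
end

section
/- Let R be a right noetherian ring. Then there exists a right R-module E such that every right R-module is isomorphic to a submodule of a direct sum of copies of E. (One may take E to be the direct sum of the injective envelopes E(R/I) over all right ideals I of R.) -/
universe u

open Finsupp in
theorem baer_finsupp {R : Type u} [Ring R] [IsNoetherianRing R]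
    {E : Type u} [AddCommGroup E] [Module R E] (hE : Module.Baer R E)
    (ι : Type u) : Module.Baer R (ι →₀ E) := by
  classical
  intro I g
  obtain ⟨s, hs⟩ := IsNoetherian.noetherian I
  set S : Finset ι := s.attach.biUnion
    (fun x => (g ⟨x.1, hs ▸ Submodule.subset_span x.2⟩).support) with hS
  have hsupp : ∀ y : ↥I, (g y).support ⊆ S := by
    rintro ⟨y, hy⟩
    have hy' : y ∈ Submodule.span R (s : Set R) := by rw [hs]; exact hy
    induction hy' using Submodule.span_induction with
    | mem x hx =>
        intro j hj
        exact Finset.mem_biUnion.2 ⟨⟨x, hx⟩, s.mem_attach _, hj⟩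
    | zero =>
        intro j hj
        have : g ⟨0, Submodule.zero_mem I⟩ = 0 := by
          have : (⟨0, Submodule.zero_mem I⟩ : ↥I) = 0 := rfl
          rw [this, map_zero]
        simp [this] at hj
    | add x y hx hy ihx ihy =>
        intro j hj
        have hxI : x ∈ I := by rw [← hs]; exact hx
        have hyI : y ∈ I := by simpa using I.sub_mem hy hxI
        have heq : (⟨x + y, hy⟩ : ↥I) = ⟨x, hxI⟩ + ⟨y, hyI⟩ := rfl
        rw [heq, map_add] at hj
        rcases Finset.mem_union.1 (Finsupp.support_add hj) with h | h
        · exact ihx hxI h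
        · exact ihy hyI h
    | smul r x hx ihx =>
        intro j hj
        have hxI : x ∈ I := by rw [← hs]; exact hx
        have heq : (⟨r • x, hy⟩ : ↥I) = r • (⟨x, hxI⟩ : ↥I) := rfl
        rw [heq, map_smul] at hj
        exact ihx hxI (Finsupp.support_smul hj)
  choose h hh using fun i => hE I (Finsupp.lapply i ∘ₗ g)
  refine ⟨∑ i ∈ S, Finsupp.lsingle i ∘ₗ h i, fun x hx => ?_⟩
  ext j
  rw [LinearMap.sum_apply, Finsupp.finset_sum_apply]
  simp only [LinearMap.comp_apply, Finsupp.lsingle_apply, Finsupp.single_apply]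
  rw [Finset.sum_ite_eq' S j (fun i => h i x)]
  by_cases hj : j ∈ S
  · rw [if_pos hj, hh j x hx]; rfl
  · rw [if_neg hj]
    exact (Finsupp.notMem_support_iff.1 fun hc => hj (hsupp ⟨x, hx⟩ hc)).symm

theorem Module.Injective.of_linearEquiv {R : Type u} [Ring R]
    {A B : Type u} [AddCommGroup A] [Module R A] [AddCommGroup B] [Module R B]
    (hA : Module.Injective R A) (e : A ≃ₗ[R] B) : Module.Injective R B where
  out X Y _ _ _ _ f hf g := by
    obtain ⟨h', hh⟩ := hA.out f hf (e.symm.toLinearMap ∘ₗ g)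
    exact ⟨e.toLinearMap ∘ₗ h', fun x => by simp [hh x]⟩

open CategoryTheory DirectSum

/-- If `R` is a noetherian ring, then there is an `R`-module `E` (for instance the direct
sum of the injective envelopes `E(R/I)` over all ideals `I`) such that every `R`-module
embeds into a direct sum of copies of `E`. -/
theorem exists_cogenerator_of_noetherian (R : Type u) [Ring R] [IsNoetherianRing R] :
    ∃ E : ModuleCat.{u} R, ∀ M : ModuleCat.{u} R,
      ∃ (I : Type u) (f : M →ₗ[R] (I →₀ E)), Function.Injective f := by
  classical
  let C : ModuleCat.{u} R := ModuleCat.of R (⨁ (I : Ideal R), R ⧸ I)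
  let E : ModuleCat.{u} R := Injective.under C
  have hEcat : CategoryTheory.Injective (ModuleCat.of R ↥E) := Injective.injective_under C
  have hEinj : Module.Injective R ↥E := Module.injective_module_of_injective_object R ↥E
  have hEbaer : Module.Baer R ↥E := Module.Baer.of_injective hEinj
  have cyc : ∀ I : Ideal R, ∃ φ : (R ⧸ I) →ₗ[R] ↥E, Function.Injective φ := by
    intro I
    refine ⟨((Injective.ι C).hom : ↥C →ₗ[R] ↥E) ∘ₗ DirectSum.lof R (Ideal R) (fun I => R ⧸ I) I, ?_⟩
    have h1 : Function.Injective ((Injective.ι C).hom : ↥C →ₗ[R] ↥E) :=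
      (ModuleCat.mono_iff_injective (Injective.ι C)).1 inferInstance
    have h2 : Function.Injective (DirectSum.lof R (Ideal R) (fun I => R ⧸ I) I) := by
      intro x y hxy
      have := congrArg (fun z : ↥C => DirectSum.component R (Ideal R) (fun I => R ⧸ I) I z) hxy
      simpa using this
    intro x y hxy
    exact h2 (h1 hxy)
  have hD : ∀ κ : Type u, Module.Injective R (κ →₀ ↥E) :=
    fun κ => (baer_finsupp hEbaer κ).injective
  refine ⟨E, fun M => ?_⟩
  -- Zorn's lemma on partially defined injective maps with support control
  set P : Set (↥M →ₗ.[R] (↥M →₀ ↥E)) :=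
    {f | Function.Injective f.toFun ∧
      ∀ x : f.domain, ((f x).support : Set ↥M) ⊆ (f.domain : Set ↥M)} with hP
  have hbotz : ∀ x : (⊥ : ↥M →ₗ.[R] (↥M →₀ ↥E)).domain, x = 0 := by
    intro x
    apply Subtype.ext
    exact (Submodule.mem_bot R).1 x.2
  have hbot : (⊥ : ↥M →ₗ.[R] (↥M →₀ ↥E)) ∈ P := by
    constructor
    · intro x y _
      rw [hbotz x, hbotz y]
    · intro x
      rw [hbotz x]
      rw [LinearPMap.map_zero]
      simp
  have hchain : ∀ c ⊆ P, IsChain (· ≤ ·) c → ∀ y ∈ c, ∃ ub ∈ P, ∀ z ∈ c, z ≤ ub := by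
    intro c hcP hc y hy
    have hdir : DirectedOn (· ≤ ·) c := hc.directedOn
    have hmem : ∀ x : (LinearPMap.sSup c hdir).domain,
        ∃ f ∈ c, (x : ↥M) ∈ f.domain := by
      intro x
      have hx := x.2
      have hdir' : DirectedOn (· ≤ ·) (LinearPMap.domain '' c) := by
        rintro _ ⟨p, hpc, rfl⟩ _ ⟨q, hqc, rfl⟩
        obtain ⟨r, hrc, hpr, hqr⟩ := hdir p hpc q hqc
        exact ⟨r.domain, Set.mem_image_of_mem _ hrc, hpr.1, hqr.1⟩
      have := (Submodule.mem_sSup_of_directed ⟨_, Set.mem_image_of_mem _ hy⟩ hdir').1 hx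
      obtain ⟨_, ⟨f, hfc, rfl⟩, hxf⟩ := this
      exact ⟨f, hfc, hxf⟩
    have happ : ∀ (f) (hf : f ∈ c) (x : (LinearPMap.sSup c hdir).domain)
        (hxf : (x : ↥M) ∈ f.domain),
        (LinearPMap.sSup c hdir) x = f ⟨x, hxf⟩ := by
      intro f hf x hxf
      have := LinearPMap.sSup_apply hdir hf (⟨x, hxf⟩ : f.domain)
      rw [← this]
    refine ⟨LinearPMap.sSup c hdir, ⟨?_, ?_⟩, fun z hz => LinearPMap.le_sSup hdir hz⟩
    · intro x y hxy
      obtain ⟨f, hfc, hxf⟩ := hmem x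
      obtain ⟨g, hgc, hyg⟩ := hmem y
      obtain ⟨k, hkc, hfk, hgk⟩ := hdir f hfc g hgc
      have hxk : (x : ↥M) ∈ k.domain := hfk.1 hxf
      have hyk : (y : ↥M) ∈ k.domain := hgk.1 hyg
      have e1 := happ k hkc x hxk
      have e2 := happ k hkc y hyk
      have : k.toFun ⟨x, hxk⟩ = k.toFun ⟨y, hyk⟩ := by
        show k ⟨x, hxk⟩ = k ⟨y, hyk⟩
        rw [← e1, ← e2]; exact hxy
      have hval : (⟨(x : ↥M), hxk⟩ : k.domain) = ⟨(y : ↥M), hyk⟩ := (hcP hkc).1 this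
      have hv := congrArg (Subtype.val : k.domain → ↥M) hval
      exact Subtype.ext hv
    · intro x
      obtain ⟨f, hfc, hxf⟩ := hmem x
      rw [happ f hfc x hxf]
      exact fun j hj => (LinearPMap.le_sSup hdir hfc).1 ((hcP hfc).2 ⟨x, hxf⟩ hj)
  obtain ⟨m, -, hm⟩ := zorn_le_nonempty₀ P hchain ⊥ hbot
  obtain ⟨minj, msupp⟩ := hm.prop
  have htop : m.domain = ⊤ := by
    by_contra hne
    obtain ⟨a, ha⟩ : ∃ a : ↥M, a ∉ m.domain := by
      by_contra hall
      push_neg at hall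
      exact hne (Submodule.eq_top_iff'.2 hall)
    set N : Submodule R ↥M := m.domain with hN
    set N' : Submodule R ↥M := N ⊔ Submodule.span R {a} with hN'
    have hle : N ≤ N' := le_sup_left
    have haN' : a ∈ N' := Submodule.mem_sup_right (Submodule.mem_span_singleton_self a)
    set D : Submodule R (↥M →₀ ↥E) := Finsupp.supported ↥E R (N : Set ↥M) with hD'
    have hDinj : Module.Injective R ↥D :=
      (hD ↥(N : Set ↥M)).of_linearEquiv (Finsupp.supportedEquivFinsupp (N : Set ↥M)).symm
    let ghat : ↥N →ₗ[R] ↥D :=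
      LinearMap.codRestrict D m.toFun (fun x => (Finsupp.mem_supported R _).2 (msupp x))
    obtain ⟨g', hg'⟩ := hDinj.out (Submodule.inclusion hle)
      (Submodule.inclusion_injective hle) ghat
    -- the cyclic quotient part
    set N'' : Submodule R ↥N' := N.comap N'.subtype with hN''
    have hmemN'' : ∀ x : ↥N', x ∈ N'' ↔ (x : ↥M) ∈ N := fun x => Iff.rfl
    let π : ↥N' →ₗ[R] (↥N' ⧸ N'') := N''.mkQ
    let abar : ↥N' ⧸ N'' := π ⟨a, haN'⟩
    let φ : R →ₗ[R] (↥N' ⧸ N'') := LinearMap.toSpanSingleton R _ abar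
    have hφ : Function.Surjective φ := by
      rw [← LinearMap.range_eq_top, ← LinearMap.span_singleton_eq_range]
      rw [Submodule.eq_top_iff']
      intro z
      obtain ⟨w, rfl⟩ := N''.mkQ_surjective z
      obtain ⟨n, hn, y, hy, hw⟩ := Submodule.mem_sup.1 w.2
      obtain ⟨r, rfl⟩ := Submodule.mem_span_singleton.1 hy
      have hw' : w = (⟨n, hle hn⟩ : ↥N') + r • ⟨a, haN'⟩ := by
        apply Subtype.ext
        simpa using hw.symm
      have hπn : π ⟨n, hle hn⟩ = 0 := (Submodule.Quotient.mk_eq_zero _).2 hn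
      have : N''.mkQ w = r • abar := by
        rw [hw', map_add, map_smul]
        show π _ + r • π _ = r • abar
        rw [hπn, zero_add]
      rw [this]
      exact Submodule.smul_mem _ r (Submodule.mem_span_singleton_self abar)
    obtain ⟨ψ, hψ⟩ := cyc (LinearMap.ker φ)
    let e := φ.quotKerEquivOfSurjective hφ
    let h : ↥N' →ₗ[R] ↥E := ψ ∘ₗ (e.symm : (↥N' ⧸ N'') →ₗ[R] (R ⧸ LinearMap.ker φ)) ∘ₗ π
    have hker : ∀ x : ↥N', h x = 0 ↔ (x : ↥M) ∈ N := by
      intro x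
      constructor
      · intro hx
        have h1 : ψ (e.symm (π x)) = 0 := hx
        have h2 : e.symm (π x) = 0 := by
          apply hψ
          rw [h1, map_zero]
        have h3 : π x = 0 := by
          have := congrArg e h2
          simpa using this
        exact ((Submodule.Quotient.mk_eq_zero _).1 h3 : x ∈ N'')
      · intro hx
        have h3 : π x = 0 := (Submodule.Quotient.mk_eq_zero _).2 ((hmemN'' x).2 hx)
        show ψ (e.symm (π x)) = 0
        rw [h3, map_zero, map_zero]
    set Gl : ↥N' →ₗ[R] (↥M →₀ ↥E) := D.subtype ∘ₗ g' + Finsupp.lsingle a ∘ₗ h with hGl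
    have hGlapp : ∀ x : ↥N', Gl x = (g' x : ↥M →₀ ↥E) + Finsupp.single a (h x) := fun x => rfl
    have hGa : ∀ x : ↥N', ((g' x : ↥M →₀ ↥E)) a = 0 := by
      intro x
      refine Finsupp.notMem_support_iff.1 fun hc => ha ?_
      exact (Finsupp.mem_supported R _).1 (g' x).2 hc
    have hGsupp : ∀ x : ↥N', ((Gl x).support : Set ↥M) ⊆ (N' : Set ↥M) := by
      intro x j hj
      rw [hGlapp] at hj
      rcases Finset.mem_union.1 (Finsupp.support_add hj) with h1 | h1
      · exact hle ((Finsupp.mem_supported R _).1 (g' x).2 h1)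
      · have := Finsupp.support_single_subset h1
        rw [Finset.mem_singleton] at this
        rw [this]
        exact haN'
    have hGzero : ∀ z : ↥N', Gl z = 0 → z = 0 := by
      intro z hz0
      have h1 : (Gl z) a = 0 := by rw [hz0]; rfl
      have h2 : h z = 0 := by
        rw [hGlapp z, Finsupp.add_apply, hGa z, Finsupp.single_eq_same, zero_add] at h1
        exact h1
      have hzN : (z : ↥M) ∈ N := (hker z).1 h2
      have hg0 : (g' z : ↥M →₀ ↥E) = 0 := by
        have := hGlapp z
        rw [hz0, h2, Finsupp.single_zero, add_zero] at this
        exact this.symm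
      have hg0' : g' z = 0 := Subtype.ext hg0
      have hzeq : z = Submodule.inclusion hle ⟨(z : ↥M), hzN⟩ := Subtype.ext rfl
      have hghat : ghat ⟨(z : ↥M), hzN⟩ = 0 := by
        rw [← hg' ⟨(z : ↥M), hzN⟩, ← hzeq, hg0']
      have hmz : m.toFun ⟨(z : ↥M), hzN⟩ = 0 := by
        have := congrArg (Subtype.val : ↥D → (↥M →₀ ↥E)) hghat
        exact this
      have : (⟨(z : ↥M), hzN⟩ : ↥N) = 0 := minj (by rw [hmz, map_zero])
      have hv := congrArg (Subtype.val : ↥N → ↥M) this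
      exact Subtype.ext hv
    have hGinj : Function.Injective Gl := by
      intro x y hxy
      have := hGzero (x - y) (by rw [map_sub, hxy, sub_self])
      exact sub_eq_zero.1 this
    set m' : ↥M →ₗ.[R] (↥M →₀ ↥E) := ⟨N', Gl⟩ with hm'
    have hm'P : m' ∈ P := ⟨hGinj, hGsupp⟩
    have hmm' : m ≤ m' := by
      refine ⟨hle, ?_⟩
      intro x y hxyv
      have hyx : y = Submodule.inclusion hle x := Subtype.ext hxyv.symm
      have hhy : h y = 0 := (hker y).2 (hxyv ▸ x.2)
      show m x = Gl y
      rw [hGlapp y, hhy, Finsupp.single_zero, add_zero, hyx, hg' x]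
      rfl
    have : m' ≤ m := hm.2 hm'P hmm'
    exact ha (this.1 haN')
  -- conclude
  have hmem : ∀ x : ↥M, x ∈ m.domain := fun x => htop ▸ Submodule.mem_top
  let inc : ↥M →ₗ[R] ↥m.domain := LinearMap.codRestrict m.domain LinearMap.id hmem
  refine ⟨↥M, m.toFun ∘ₗ inc, ?_⟩
  intro x y hxy
  have : inc x = inc y := minj hxy
  exact congrArg Subtype.val this
end

section
/- Let γ = (γ'_n : C_n ↠ C_{n+1})_{n∈ℕ} be a sequence of surjective R-module maps, where C_n = C/B_n for an ascending chain of submodules B_0 ⊆ B_1 ⊆ ⋯ of an R-module C, and let X be an injective R-module. Then for each n there is a short exact sequence of abelian groups 0 → X_{γ_{n+1}} → X_{γ_n} → Hom(B_{n+1}/B_n, X) → 0, where X_{γ_n} denotes the image of Hom(C_n, X) → Hom(C, X) induced by the quotient map C → C_n. -/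
universe u

/-- For an ascending chain `B₀ ⊆ B₁ ⊆ ⋯` of submodules of `C`, quotients `Cₙ = C/Bₙ`, and
an injective module `X`, there is for each `n` a short exact sequence
`0 → X_{γₙ₊₁} → X_{γₙ} → Hom(Bₙ₊₁/Bₙ, X) → 0`, where `X_{γₙ}` is the subgroup of maps
`C → X` vanishing on `Bₙ` (the image of `Hom(C/Bₙ, X) → Hom(C, X)`).  Here
`Hom(Bₙ₊₁/Bₙ, X)` is identified with the maps `Bₙ₊₁ → X` vanishing on `Bₙ`, the middle
map is restriction, and surjectivity uses injectivity of `X`. -/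
theorem hom_vanishing_chain_ses {R : Type u} [Ring R]
    {C : Type u} [AddCommGroup C] [Module R C]
    (B : ℕ → Submodule R C) (hB : Monotone B)
    (X : Type u) [AddCommGroup X] [Module R X] [Module.Injective R X] :
    ∀ n : ℕ,
      -- `X_{γₙ₊₁} ⊆ X_{γₙ}`
      ({f : C →ₗ[R] X | ∀ b ∈ B (n + 1), f b = 0} ⊆
        {f : C →ₗ[R] X | ∀ b ∈ B n, f b = 0}) ∧
      -- exactness in the middle: `f ∈ X_{γₙ}` restricts to `0` on `Bₙ₊₁` iff `f ∈ X_{γₙ₊₁}`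
      (∀ f : C →ₗ[R] X, (∀ b ∈ B n, f b = 0) →
        ((∀ b : B (n + 1), f (b : C) = 0) ↔ ∀ b ∈ B (n + 1), f b = 0)) ∧
      -- surjectivity onto `Hom(Bₙ₊₁/Bₙ, X)`
      (∀ g : ↥(B (n + 1)) →ₗ[R] X, (∀ b : B (n + 1), (b : C) ∈ B n → g b = 0) →
        ∃ f : C →ₗ[R] X, (∀ b ∈ B n, f b = 0) ∧ ∀ b : B (n + 1), f (b : C) = g b) := by
  intro n
  refine ⟨fun f hf b hb => hf b (hB (Nat.le_succ n) hb), ?_, ?_⟩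
  · intro f _
    constructor
    · intro h b hb; exact h ⟨b, hb⟩
    · intro h b; exact h b b.2
  · intro g hg
    obtain ⟨f, hf⟩ := Module.Injective.out (B (n + 1)).subtype
      (Submodule.injective_subtype _) g
    refine ⟨f, fun b hb => ?_, fun b => hf b⟩
    exact (hf ⟨b, hB (Nat.le_succ n) hb⟩).trans (hg ⟨b, hB (Nat.le_succ n) hb⟩ hb)
end

section
/- Let R be a right noetherian ring and (E_i)_{i∈I} a family of injective right R-modules. Then the direct sum ⊕_{i∈I} E_i is injective. -/
universe u

open DirectSum

/-- Over a noetherian ring, any direct sum of injective modules is injective. -/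
theorem directSum_injective_of_noetherian (R : Type u) [Ring R] [IsNoetherianRing R]
    {I : Type u} [DecidableEq I] (E : I → Type u)
    [∀ i, AddCommGroup (E i)] [∀ i, Module R (E i)] [∀ i, Module.Injective R (E i)] :
    Module.Injective R (⨁ i, E i) := by
  classical
  apply Module.Baer.injective
  intro J g
  obtain ⟨t, ht⟩ := IsNoetherian.noetherian J
  subst ht
  -- the finite set of coordinates where the generators are supported
  set S : Finset I := t.attach.biUnion
    (fun r => (g ⟨r.1, Submodule.subset_span r.2⟩).support) with hS
  -- every element of the image of `g` is supported in `S`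
  have hsupp : ∀ (x : R) (hx : x ∈ Submodule.span R (↑t : Set R)) (j : I),
      j ∉ S → g ⟨x, hx⟩ j = 0 := by
    intro x hx
    induction hx using Submodule.span_induction with
    | mem y hy =>
      intro j hj
      by_contra hne
      exact hj (Finset.mem_biUnion.mpr ⟨⟨y, hy⟩, Finset.mem_attach _ _,
        DFinsupp.mem_support_iff.mpr hne⟩)
    | zero =>
      intro j _
      have : (⟨0, Submodule.zero_mem _⟩ : Submodule.span R (↑t : Set R)) = 0 := rfl
      rw [this, map_zero, DFinsupp.zero_apply]
    | add x y hx hy ihx ihy =>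
      intro j hj
      have : (⟨x + y, Submodule.add_mem _ hx hy⟩ : Submodule.span R (↑t : Set R))
          = ⟨x, hx⟩ + ⟨y, hy⟩ := rfl
      rw [this, map_add, DFinsupp.add_apply, ihx j hj, ihy j hj, add_zero]
    | smul r x hx ih =>
      intro j hj
      have : (⟨r • x, Submodule.smul_mem _ r hx⟩ : Submodule.span R (↑t : Set R))
          = r • ⟨x, hx⟩ := rfl
      rw [this, map_smul, DFinsupp.smul_apply, ih j hj, smul_zero]
  -- choose extensions of the components of `g`
  have hext : ∀ i : I, ∃ h : R →ₗ[R] E i,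
      ∀ (x : R) (hx : x ∈ Submodule.span R (↑t : Set R)),
      h x = DirectSum.component R I E i (g ⟨x, hx⟩) := by
    intro i
    obtain ⟨h, hh⟩ := Module.Baer.of_injective
      (inferInstance : Module.Injective R (E i)) (Submodule.span R (↑t : Set R))
      ((DirectSum.component R I E i) ∘ₗ g)
    exact ⟨h, fun x hx => hh x hx⟩
  choose h hh using hext
  refine ⟨∑ i ∈ S, (DirectSum.lof R I E i) ∘ₗ h i, fun x hx => ?_⟩
  rw [LinearMap.sum_apply]
  have key : ∀ i ∈ S, ((DirectSum.lof R I E i) ∘ₗ h i) x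
      = DirectSum.lof R I E i ((g ⟨x, hx⟩) i) := by
    intro i _
    rw [LinearMap.comp_apply, hh i x hx]
    rfl
  rw [Finset.sum_congr rfl key]
  have hsub : (g ⟨x, hx⟩).support ⊆ S := by
    intro j hj
    by_contra hjS
    exact DFinsupp.mem_support_iff.mp hj (hsupp x hx j hjS)
  calc ∑ i ∈ S, DirectSum.lof R I E i ((g ⟨x, hx⟩) i)
      = ∑ i ∈ (g ⟨x, hx⟩).support, DirectSum.lof R I E i ((g ⟨x, hx⟩) i) := by
        refine (Finset.sum_subset hsub ?_).symm
        intro i _ hi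
        rw [DFinsupp.notMem_support_iff.mp hi, map_zero]
    _ = g ⟨x, hx⟩ := DirectSum.sum_support_of _
end

section
/- Let R be a ring such that every direct sum of injective right R-modules is injective (it suffices that countable direct sums of injective hulls are injective). Then R is right noetherian. -/
universe u

open DirectSum

open CategoryTheory in
lemma exists_emb (R : Type u) [Ring R] (M : Type u) [AddCommGroup M] [Module R M] :
    ∃ (E : Type u) (_ : AddCommGroup E) (_ : Module R E),
      Module.Injective R E ∧ ∃ e : M →ₗ[R] E, Function.Injective e := by
  let Mc : ModuleCat.{u} R := ModuleCat.of R M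
  refine ⟨↥(Injective.under Mc), inferInstance, inferInstance, ?_,
    (Injective.ι Mc).hom, (ModuleCat.mono_iff_injective (Injective.ι Mc)).mp inferInstance⟩
  exact Module.injective_module_of_injective_object _ _ (inj := Injective.injective_under Mc)

/-- Matlis–Papp: if every countable direct sum of injective `R`-modules is injective,
then `R` is noetherian. -/
theorem noetherian_of_countable_directSum_injective (R : Type u) [Ring R]
    (h : ∀ (E : ℕ → Type u) (_ : ∀ n, AddCommGroup (E n)) (_ : ∀ n, Module R (E n)),
      (∀ n, Module.Injective R (E n)) → Module.Injective R (⨁ n, E n)) :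
    IsNoetherianRing R := by
  classical
  rw [IsNoetherianRing, ← monotone_stabilizes_iff_noetherian]
  intro f
  set I : Submodule R R := ⨆ n, f n with hI
  have hmem : ∀ x : R, x ∈ I ↔ ∃ n, x ∈ f n := fun x =>
    Submodule.mem_iSup_of_directed _ f.monotone.directed_le
  -- choose injective embeddings of the quotients
  have hex : ∀ n : ℕ, ∃ (E : Type u) (_ : AddCommGroup E) (_ : Module R E),
      Module.Injective R E ∧ ∃ e : (R ⧸ f n) →ₗ[R] E, Function.Injective e :=
    fun n => exists_emb R (R ⧸ f n)
  choose E i1 i2 hEinj e he using hex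
  letI : ∀ n, AddCommGroup (E n) := i1
  letI : ∀ n, Module R (E n) := i2
  haveI hQ : Module.Injective R (⨁ n, E n) := h E i1 i2 hEinj
  -- the component maps
  set c : ∀ n : ℕ, ↥I →ₗ[R] E n := fun n => e n ∘ₗ (f n).mkQ ∘ₗ I.subtype with hc
  have hc0 : ∀ (x : ↥I) (n : ℕ), (x : R) ∈ f n → c n x = 0 := by
    intro x n hx
    have : Submodule.Quotient.mk (x : R) = (0 : R ⧸ f n) :=
      (Submodule.Quotient.mk_eq_zero _).2 hx
    simp [hc, LinearMap.comp_apply, Submodule.mkQ_apply, this]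
  have hc0' : ∀ (x : ↥I) (n : ℕ), c n x = 0 → (x : R) ∈ f n := by
    intro x n h0
    have h0' : e n (Submodule.Quotient.mk (x : R)) = e n 0 := by
      simpa [hc, LinearMap.comp_apply] using h0
    exact (Submodule.Quotient.mk_eq_zero _).1 (he n h0')
  -- choose for each x an index where it lies
  have hNx : ∀ x : ↥I, ∃ n, (x : R) ∈ f n := fun x => (hmem x).1 x.2
  choose N hNmem using hNx
  -- the map into the direct sum
  set g : ↥I → ⨁ n, E n :=
    fun x => DirectSum.mk E (Finset.range (N x)) (fun k => c k.1 x) with hgdef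
  have hg : ∀ (x : ↥I) (k : ℕ), (g x) k = c k x := by
    intro x k
    by_cases hk : k ∈ Finset.range (N x)
    · exact DirectSum.mk_apply_of_mem hk
    · rw [hgdef]
      rw [DirectSum.mk_apply_of_notMem hk]
      exact (hc0 x k (f.monotone (Nat.le_of_not_lt (by simpa using hk)) (hNmem x))).symm
  set φ : ↥I →ₗ[R] ⨁ n, E n :=
    { toFun := g
      map_add' := fun x y => DFinsupp.ext fun k => by
        simp [hg, DirectSum.add_apply, map_add]
      map_smul' := fun r x => DFinsupp.ext fun k => by
        simp [hg, DirectSum.smul_apply, map_smul] } with hφ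
  obtain ⟨G, hG⟩ := hQ.out I.subtype (Submodule.injective_subtype I) φ
  set y : ⨁ n, E n := G 1 with hy
  obtain ⟨Nf, hNf⟩ := Finset.exists_nat_subset_range y.support
  have hyz : ∀ k, Nf ≤ k → y k = 0 := by
    intro k hk
    by_contra hne
    have : k ∈ y.support := DFinsupp.mem_support_iff.2 hne
    have := hNf this
    simp only [Finset.mem_range] at this
    omega
  have hIle : I ≤ f Nf := by
    intro x hx
    have hGx : G x = x • y := by
      rw [hy, ← map_smul, smul_eq_mul, mul_one]
    have : φ ⟨x, hx⟩ = x • y := by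
      rw [← hGx]; exact (hG ⟨x, hx⟩).symm ▸ rfl
    have hcomp : c Nf ⟨x, hx⟩ = x • y Nf := by
      have := congrArg (fun z => z Nf) this
      simpa [hφ, hg, DFinsupp.smul_apply, DirectSum.smul_apply] using this
    apply hc0' ⟨x, hx⟩ Nf
    rw [hcomp, hyz Nf le_rfl, smul_zero]
  refine ⟨Nf, fun m hm => le_antisymm (f.monotone hm) ?_⟩
  exact le_trans (le_iSup f m) hIle
end
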